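/- Let W be a walk in a digraph on n nodes that shares a node with a cycle Γ, and let k be an integer with k ≡ ℓ(W) (mod ℓ(Γ)) and k ≥ n². Then there exists a walk W' with the same start and end nodes as W, of length exactly k, obtained from W by removing subcycles and inserting copies of Γ; in particular every node of W' is a node of W or of Γ. -/
import Mathlib


/-- `f` lists the successive nodes of a walk of length `k` in the digraph with
edge relation `E`. -/
def IsGWalk {n : ℕ} (E : Fin n → Fin n → Prop) {k : ℕ} (f : Fin (k + 1) → Fin n) : Prop :=
  ∀ t : Fin k, E (f t.castSucc) (f t.succ)

/-- A cycle: a nonempty closed walk in which only the start and end node coincide. -/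
def IsGCycle {n : ℕ} (E : Fin n → Fin n → Prop) {k : ℕ} (f : Fin (k + 1) → Fin n) : Prop :=
  0 < k ∧ IsGWalk E f ∧ f 0 = f (Fin.last k) ∧
    Function.Injective (fun t : Fin k => f t.castSucc)

namespace HAhelp

variable {n lΓ : ℕ} {E : Fin n → Fin n → Prop} {g : Fin (lΓ + 1) → Fin n}

/-- The vertex set of the cycle. -/
def gset (g : Fin (lΓ + 1) → Fin n) : Finset (Fin n) :=
  Finset.image (fun t : Fin lΓ => g t.castSucc) Finset.univ

lemma mem_gset {v : Fin n} : v ∈ gset g ↔ ∃ t : Fin lΓ, g t.castSucc = v := by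
  simp [gset]

lemma g_mem_gset (hΓ : IsGCycle E g) (σ : Fin (lΓ + 1)) : g σ ∈ gset g := by
  rcases lt_or_eq_of_le (Nat.lt_succ_iff.1 σ.isLt) with h | h
  · exact mem_gset.2 ⟨⟨σ.val, h⟩, congrArg g (Fin.ext rfl)⟩
  · have h0 : σ = Fin.last lΓ := Fin.ext h
    rw [h0, ← hΓ.2.2.1]
    exact mem_gset.2 ⟨⟨0, hΓ.1⟩, congrArg g (Fin.ext rfl)⟩

lemma cyc_edge (hΓ : IsGCycle E g) (m : ℕ) :
    E (g ⟨m % lΓ, Nat.lt_succ_of_lt (Nat.mod_lt _ hΓ.1)⟩)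
      (g ⟨(m + 1) % lΓ, Nat.lt_succ_of_lt (Nat.mod_lt _ hΓ.1)⟩) := by
  have ha : m % lΓ < lΓ := Nat.mod_lt _ hΓ.1
  have hstep := hΓ.2.1 ⟨m % lΓ, ha⟩
  have hcl := hΓ.2.2.1
  have hsucc : (m + 1) % lΓ = (m % lΓ + 1) % lΓ := by
    conv_lhs => rw [Nat.add_mod]
    simp
  have e1 : g ⟨m % lΓ, Nat.lt_succ_of_lt (Nat.mod_lt _ hΓ.1)⟩
      = g (Fin.castSucc ⟨m % lΓ, ha⟩) := congrArg g (Fin.ext rfl)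
  have e2 : g ⟨(m + 1) % lΓ, Nat.lt_succ_of_lt (Nat.mod_lt _ hΓ.1)⟩
      = g (Fin.succ ⟨m % lΓ, ha⟩) := by
    rcases Nat.lt_or_ge (m % lΓ + 1) lΓ with h | h
    · refine congrArg g (Fin.ext ?_)
      show (m + 1) % lΓ = m % lΓ + 1
      rw [hsucc]
      exact Nat.mod_eq_of_lt h
    · have hEq : m % lΓ + 1 = lΓ := by omega
      have h2 : (m + 1) % lΓ = 0 := by rw [hsucc, hEq, Nat.mod_self]
      calc g ⟨(m + 1) % lΓ, Nat.lt_succ_of_lt (Nat.mod_lt _ hΓ.1)⟩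
          = g 0 := congrArg g (Fin.ext h2)
        _ = g (Fin.last lΓ) := hcl
        _ = g (Fin.succ ⟨m % lΓ, ha⟩) := by
            refine congrArg g (Fin.ext ?_)
            simp only [Fin.val_last, Fin.val_succ]
            omega
  rw [e1, e2]
  exact hstep

/-- One shortening step: remove a closed segment of length a positive multiple of `lΓ`,
preserving endpoints and contact with the cycle. -/
lemma step (hΓ : IsGCycle E g) (hln : lΓ ≤ n) {ℓ : ℕ} {w : ℕ → Fin n}
    (hw : ∀ i, i < ℓ → E (w i) (w (i + 1))) (hbig : n ^ 2 < ℓ)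
    {s₀ : ℕ} (hs₀ : s₀ ≤ ℓ) (hc : w s₀ ∈ gset g) :
    ∃ d, 0 < d ∧ d ≤ ℓ ∧ lΓ ∣ d ∧
      ∃ w' : ℕ → Fin n,
        (∀ i, i < ℓ - d → E (w' i) (w' (i + 1))) ∧ w' 0 = w 0 ∧ w' (ℓ - d) = w ℓ ∧
        (∃ s, s ≤ ℓ - d ∧ w' s ∈ gset g) ∧ (∀ i, i ≤ ℓ - d → ∃ m, m ≤ ℓ ∧ w' i = w m) := by
  classical
  have hpos : 0 < lΓ := hΓ.1
  have hcardΓ : (gset g).card = lΓ := by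
    rw [gset, Finset.card_image_of_injective _ hΓ.2.2.2]; simp
  set T : Finset (ℕ × Fin n × Bool) :=
    (Finset.range lΓ) ×ˢ (((gset g) ×ˢ ({false} : Finset Bool)) ∪
      ((gset g)ᶜ ×ˢ (Finset.univ : Finset Bool))) with hT
  have hTcard : T.card ≤ n ^ 2 := by
    have hdisj : Disjoint ((gset g) ×ˢ ({false} : Finset Bool))
        ((gset g)ᶜ ×ˢ (Finset.univ : Finset Bool)) := by
      rw [Finset.disjoint_left]
      rintro ⟨v, b⟩ h1 h2
      simp only [Finset.mem_product, Finset.mem_compl] at h1 h2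
      exact h2.1 h1.1
    have hcardc : ((gset g)ᶜ : Finset (Fin n)).card = n - lΓ := by
      rw [Finset.card_compl, hcardΓ]; simp
    have : T.card = lΓ * (lΓ * 1 + (n - lΓ) * 2) := by
      rw [hT, Finset.card_product, Finset.card_union_of_disjoint hdisj,
        Finset.card_product, Finset.card_product, hcardΓ, hcardc, Finset.card_range]
      simp
    rw [this]
    obtain ⟨c, hcc⟩ : ∃ c, n = lΓ + c := ⟨n - lΓ, by omega⟩
    rw [show n - lΓ = c by omega]
    nlinarith [sq_nonneg c]
  set F : ℕ → ℕ × Fin n × Bool :=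
    fun i => (i % lΓ, w i, if w i ∈ gset g then false else decide (s₀ < i)) with hF
  have hmaps : ∀ a ∈ Finset.range (ℓ + 1), F a ∈ T := by
    intro a _
    rw [hF, hT]
    simp only [Finset.mem_product, Finset.mem_range, Finset.mem_union, Finset.mem_compl,
      Finset.mem_singleton, Finset.mem_univ]
    refine ⟨Nat.mod_lt _ hpos, ?_⟩
    by_cases hmem : w a ∈ gset g
    · left; simp [hmem]
    · right; simp [hmem]
  have hcard : T.card < (Finset.range (ℓ + 1)).card := by
    rw [Finset.card_range]; omega
  obtain ⟨i, hi, j, hj, hne, hFeq⟩ :=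
    Finset.exists_ne_map_eq_of_card_lt_of_maps_to hcard hmaps
  rw [Finset.mem_range] at hi hj
  -- reduce to the ordered case
  suffices key : ∀ p q : ℕ, q ≤ ℓ → p < q → F p = F q →
      ∃ d, 0 < d ∧ d ≤ ℓ ∧ lΓ ∣ d ∧
        ∃ w' : ℕ → Fin n,
          (∀ i, i < ℓ - d → E (w' i) (w' (i + 1))) ∧ w' 0 = w 0 ∧ w' (ℓ - d) = w ℓ ∧
          (∃ s, s ≤ ℓ - d ∧ w' s ∈ gset g) ∧ (∀ i, i ≤ ℓ - d → ∃ m, m ≤ ℓ ∧ w' i = w m) by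
    rcases lt_or_gt_of_ne hne with h | h
    · exact key i j (by omega) h hFeq
    · exact key j i (by omega) h hFeq.symm
  intro p q hq hpq hFpq
  rw [hF] at hFpq
  simp only [Prod.mk.injEq] at hFpq
  obtain ⟨hmod, hvtx, hside⟩ := hFpq
  set d := q - p with hd
  have hdvd : lΓ ∣ d := (Nat.modEq_iff_dvd' hpq.le).1 hmod
  have hpd : p + d = q := by omega
  refine ⟨d, by omega, by omega, hdvd, fun i => if i ≤ p then w i else w (i + d),
    ?_, ?_, ?_, ?_, ?_⟩
  · -- edges
    intro i hik
    simp only []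
    rcases lt_trichotomy i p with h | h | h
    · rw [if_pos h.le, if_pos (by omega : i + 1 ≤ p)]
      exact hw i (by omega)
    · subst h
      rw [if_pos le_rfl, if_neg (by omega : ¬ i + 1 ≤ i), hvtx,
        show i + 1 + d = q + 1 by omega]
      exact hw q (by omega)
    · rw [if_neg (by omega : ¬ i ≤ p), if_neg (by omega : ¬ i + 1 ≤ p),
        show i + 1 + d = (i + d) + 1 by omega]
      exact hw (i + d) (by omega)
  · simp only []
    rw [if_pos (Nat.zero_le p)]
  · simp only []
    by_cases he : ℓ - d ≤ p
    · rw [if_pos he, show ℓ - d = p by omega, hvtx, show q = ℓ by omega]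
    · rw [if_neg he, show ℓ - d + d = ℓ by omega]
  · -- contact
    by_cases hmem : w p ∈ gset g
    · exact ⟨p, by omega, by simp only []; rw [if_pos le_rfl]; exact hmem⟩
    · have hmemq : w q ∉ gset g := by rw [← hvtx]; exact hmem
      rw [if_neg hmem, if_neg hmemq] at hside
      have hiff := decide_eq_decide.1 hside
      by_cases hcase : s₀ < p
      · exact ⟨s₀, by omega, by simp only []; rw [if_pos (by omega : s₀ ≤ p)]; exact hc⟩
      · have h2 : ¬ s₀ < q := fun hh => hcase (hiff.2 hh)
        have h4 : q ≠ s₀ := by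
          intro hh
          exact hmemq (by rw [hh]; exact hc)
        refine ⟨s₀ - d, by omega, ?_⟩
        simp only []
        rw [if_neg (by omega : ¬ s₀ - d ≤ p), show s₀ - d + d = s₀ by omega]
        exact hc
  · intro i hik
    by_cases h : i ≤ p
    · exact ⟨i, by omega, by simp only []; rw [if_pos h]⟩
    · exact ⟨i + d, by omega, by simp only []; rw [if_neg h]⟩

/-- Shorten a walk (preserving residue mod `lΓ`, endpoints, cycle contact, and vertices)
down to length at most `k`. -/
lemma shorten (hΓ : IsGCycle E g) (hln : lΓ ≤ n) {k : ℕ} (hk : n ^ 2 ≤ k) :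
    ∀ ℓ, ∀ w : ℕ → Fin n, (∀ i, i < ℓ → E (w i) (w (i + 1))) → ℓ % lΓ = k % lΓ →
      (∃ s, s ≤ ℓ ∧ w s ∈ gset g) →
      ∃ ℓ', ℓ' ≤ k ∧ ℓ' % lΓ = k % lΓ ∧ ∃ w' : ℕ → Fin n,
        (∀ i, i < ℓ' → E (w' i) (w' (i + 1))) ∧ w' 0 = w 0 ∧ w' ℓ' = w ℓ ∧
        (∃ s, s ≤ ℓ' ∧ w' s ∈ gset g) ∧ (∀ i, i ≤ ℓ' → ∃ m, m ≤ ℓ ∧ w' i = w m) := by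
  intro ℓ
  induction ℓ using Nat.strong_induction_on with
  | _ ℓ IH =>
    intro w hw hmod hcon
    by_cases hle : ℓ ≤ k
    · exact ⟨ℓ, hle, hmod, w, hw, rfl, rfl, hcon, fun i hi => ⟨i, hi, rfl⟩⟩
    · obtain ⟨s₀, hs₀, hc⟩ := hcon
      obtain ⟨d, hd0, hdl, hdvd, w', hw', h0, hlast, hcon', hval⟩ :=
        step hΓ hln hw (by omega) hs₀ hc
      have hmod' : (ℓ - d) % lΓ = k % lΓ := by
        have h1 : ℓ - d ≡ ℓ [MOD lΓ] := (Nat.modEq_iff_dvd' (by omega)).2 (by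
          rw [show ℓ - (ℓ - d) = d by omega]; exact hdvd)
        exact h1.trans hmod
      obtain ⟨ℓ'', hle'', hmod'', w'', hw'', h0'', hlast'', hcon'', hval''⟩ :=
        IH (ℓ - d) (by omega) w' hw' hmod' hcon'
      refine ⟨ℓ'', hle'', hmod'', w'', hw'', by rw [h0'', h0], by rw [hlast'', hlast],
        hcon'', ?_⟩
      intro i hi
      obtain ⟨m, hm, he⟩ := hval'' i hi
      obtain ⟨m2, hm2, he2⟩ := hval m hm
      exact ⟨m2, hm2, by rw [he, he2]⟩

/-- Pump copies of the cycle at a contact point to extend the walk to length exactly `k`. -/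
lemma pump (hΓ : IsGCycle E g) {k ℓ : ℕ} (hlk : ℓ ≤ k) (hmod : ℓ % lΓ = k % lΓ)
    {w : ℕ → Fin n} (hw : ∀ i, i < ℓ → E (w i) (w (i + 1)))
    {s : ℕ} (hs : s ≤ ℓ) (hc : w s ∈ gset g) :
    ∃ w' : ℕ → Fin n, (∀ i, i < k → E (w' i) (w' (i + 1))) ∧ w' 0 = w 0 ∧ w' k = w ℓ ∧
      ∀ i, i ≤ k → (∃ m, m ≤ ℓ ∧ w' i = w m) ∨ ∃ σ : Fin (lΓ + 1), w' i = g σ := by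
  have hpos : 0 < lΓ := hΓ.1
  obtain ⟨t, ht⟩ := mem_gset.1 hc
  have hDdvd : lΓ ∣ k - ℓ := (Nat.modEq_iff_dvd' hlk).1 hmod
  set D := k - ℓ with hDdef
  set L : ℕ → Fin n := fun m => g ⟨(t.val + m) % lΓ, Nat.lt_succ_of_lt (Nat.mod_lt _ hpos)⟩
    with hL
  have hL0 : L 0 = w s := by
    rw [hL, ← ht]
    exact congrArg g (Fin.ext (by simp [Nat.mod_eq_of_lt t.isLt]))
  have hLD : L D = w s := by
    obtain ⟨e, he⟩ := hDdvd
    rw [hL, ← ht]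
    refine congrArg g (Fin.ext ?_)
    show (t.val + D) % lΓ = (t.castSucc : Fin (lΓ + 1)).val
    rw [show D = lΓ * e from he, Nat.add_mul_mod_self_left, Nat.mod_eq_of_lt t.isLt]
    rfl
  have hLe : ∀ m, E (L m) (L (m + 1)) := by
    intro m
    exact cyc_edge hΓ (t.val + m)
  have hkD : k = ℓ + D := by omega
  refine ⟨fun i => if i < s then w i else if i < s + D then L (i - s) else w (i - D),
    ?_, ?_, ?_, ?_⟩
  · intro i hik
    simp only []
    by_cases h1 : i < s
    · rw [if_pos h1]
      by_cases h2 : i + 1 < s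
      · rw [if_pos h2]
        exact hw i (by omega)
      · -- i + 1 = s
        rw [if_neg h2]
        by_cases h3 : i + 1 < s + D
        · rw [if_pos h3, show i + 1 - s = 0 by omega, hL0, show s = i + 1 by omega]
          exact hw i (by omega)
        · rw [if_neg h3, show i + 1 - D = i + 1 by omega]
          exact hw i (by omega)
    · rw [if_neg h1]
      by_cases h3 : i < s + D
      · rw [if_pos h3, if_neg (by omega : ¬ i + 1 < s)]
        by_cases h4 : i + 1 < s + D
        · rw [if_pos h4, show i + 1 - s = (i - s) + 1 by omega]
          exact hLe (i - s)
        · rw [if_neg h4, show i + 1 - D = s by omega, ← hLD,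
            show D = (i - s) + 1 by omega]
          exact hLe (i - s)
      · rw [if_neg h3, if_neg (by omega : ¬ i + 1 < s), if_neg (by omega : ¬ i + 1 < s + D),
          show i + 1 - D = (i - D) + 1 by omega]
        exact hw (i - D) (by omega)
  · simp only []
    by_cases h1 : 0 < s
    · rw [if_pos h1]
    · by_cases h2 : 0 < s + D
      · rw [if_neg h1, if_pos h2, show (0 : ℕ) - s = 0 by omega, hL0,
          show s = 0 by omega]
      · rw [if_neg h1, if_neg h2, show (0 : ℕ) - D = 0 by omega]
  · simp only []
    rw [if_neg (by omega : ¬ k < s), if_neg (by omega : ¬ k < s + D),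
      show k - D = ℓ by omega]
  · intro i hik
    simp only []
    by_cases h1 : i < s
    · exact Or.inl ⟨i, by omega, by rw [if_pos h1]⟩
    · by_cases h3 : i < s + D
      · exact Or.inr ⟨_, by rw [if_neg h1, if_pos h3]⟩
      · exact Or.inl ⟨i - D, by omega, by rw [if_neg h1, if_neg h3]⟩

end HAhelp

theorem hartmann_arguelles_walk_modification {n : ℕ} (E : Fin n → Fin n → Prop)
    {lW lΓ : ℕ} (f : Fin (lW + 1) → Fin n) (g : Fin (lΓ + 1) → Fin n)
    (hW : IsGWalk E f) (hΓ : IsGCycle E g)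
    (hshare : ∃ (t : Fin (lW + 1)) (s : Fin (lΓ + 1)), f t = g s)
    (k : ℕ) (hcong : k % lΓ = lW % lΓ) (hk : n ^ 2 ≤ k) :
    ∃ f' : Fin (k + 1) → Fin n, IsGWalk E f' ∧
      f' 0 = f 0 ∧ f' (Fin.last k) = f (Fin.last lW) ∧
      ∀ t : Fin (k + 1), (∃ s, f' t = f s) ∨ (∃ s, f' t = g s) := by
  classical
  have hpos : 0 < lΓ := hΓ.1
  have hln : lΓ ≤ n := by
    have h := Fintype.card_le_of_injective _ hΓ.2.2.2
    simpa using h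
  set w : ℕ → Fin n := fun i => f ⟨min i lW, by omega⟩ with hwdef
  have hwalk : ∀ i, i < lW → E (w i) (w (i + 1)) := by
    intro i hi
    have h1 : (⟨min i lW, by omega⟩ : Fin (lW + 1)) = Fin.castSucc ⟨i, hi⟩ :=
      Fin.ext (by simp only [Fin.coe_castSucc]; omega)
    have h2 : (⟨min (i + 1) lW, by omega⟩ : Fin (lW + 1)) = Fin.succ ⟨i, hi⟩ :=
      Fin.ext (by simp only [Fin.val_succ]; omega)
    rw [hwdef]
    simp only []
    rw [h1, h2]
    exact hW ⟨i, hi⟩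
  have hw0 : w 0 = f 0 := by
    rw [hwdef]; exact congrArg f (Fin.ext (by simp))
  have hwlast : w lW = f (Fin.last lW) := by
    rw [hwdef]; exact congrArg f (Fin.ext (by simp [Fin.last]))
  have hcon : ∃ s, s ≤ lW ∧ w s ∈ HAhelp.gset g := by
    obtain ⟨t, σ, hts⟩ := hshare
    refine ⟨t.val, Nat.lt_succ_iff.1 t.isLt, ?_⟩
    have : w t.val = f t := by
      rw [hwdef]
      exact congrArg f (Fin.ext (by simp only []; omega))
    rw [this, hts]
    exact HAhelp.g_mem_gset hΓ σ
  obtain ⟨ℓ', hle', hmod', w', hw', h0', hlast', hcon', hval'⟩ :=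
    HAhelp.shorten hΓ hln hk lW w hwalk hcong.symm hcon
  obtain ⟨s, hs, hcs⟩ := hcon'
  obtain ⟨w'', hw'', h0'', hlast'', hval''⟩ :=
    HAhelp.pump hΓ hle' hmod' hw' hs hcs
  refine ⟨fun t => w'' t.val, ?_, ?_, ?_, ?_⟩
  · intro t
    exact hw'' t.val t.isLt
  · show w'' 0 = f 0
    rw [h0'', h0', hw0]
  · show w'' k = f (Fin.last lW)
    rw [hlast'', hlast', hwlast]
  · intro t
    rcases hval'' t.val (Nat.lt_succ_iff.1 t.isLt) with ⟨m, hm, he⟩ | ⟨σ, he⟩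
    · obtain ⟨m2, hm2, he2⟩ := hval' m hm
      have hwm : w m2 = f ⟨m2, Nat.lt_succ_of_le hm2⟩ := by
        rw [hwdef]
        exact congrArg f (Fin.ext (by simp only []; omega))
      refine Or.inl ⟨⟨m2, Nat.lt_succ_of_le hm2⟩, ?_⟩
      show w'' t.val = f ⟨m2, Nat.lt_succ_of_le hm2⟩
      rw [he, he2, hwm]
    · exact Or.inr ⟨σ, he⟩
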